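/- Expansion preserves parallelism: if (S^(1), …, S^(n-1)) is a partition of P_n into n-1 parallel steps of size n/2 each (n even), then the expanded family for order 2n—consisting of the first step ((2k-1,2k) : 1 ≤ k ≤ n), and, for each original step S^(i), the two steps {(2p-1,2q-1),(2p,2q) : (p,q) ∈ S^(i)} and {(2p-1,2q),(2p,2q-1) : (p,q) ∈ S^(i)}—is a partition of P_{2n} into 2n-1 parallel steps, each consisting of n pairwise disjoint pivot pairs. -/

import Mathlib

/-- `P_n = {(i,j) : 1 ≤ i < j ≤ n}`. -/
def PivotPairs (n : ℕ) : Finset (ℕ × ℕ) :=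
  (Finset.Icc 1 n ×ˢ Finset.Icc 1 n).filter (fun p => p.1 < p.2)

/-- Two pivot pairs are disjoint (non-colliding) if they share no index. -/
def DisjPair (a b : ℕ × ℕ) : Prop :=
  a.1 ≠ b.1 ∧ a.1 ≠ b.2 ∧ a.2 ≠ b.1 ∧ a.2 ≠ b.2

lemma memPP {n a b : ℕ} : (a, b) ∈ PivotPairs n ↔ 1 ≤ a ∧ a < b ∧ b ≤ n := by
  simp only [PivotPairs, Finset.mem_filter, Finset.mem_product, Finset.mem_Icc]
  omega

lemma expand_subset {n : ℕ} {S : Finset (ℕ × ℕ)} (s t : ℕ) (hs : s ≤ 1) (ht : t ≤ 1)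
    (hS : ∀ pq ∈ S, 1 ≤ pq.1 ∧ pq.1 < pq.2 ∧ pq.2 ≤ n) :
    S.biUnion (fun pq => {(2*pq.1 - s, 2*pq.2 - t), (2*pq.1 - (1-s), 2*pq.2 - (1-t))})
      ⊆ PivotPairs (2*n) := by
  intro x hx
  simp only [Finset.mem_biUnion, Finset.mem_insert, Finset.mem_singleton] at hx
  obtain ⟨⟨p, q⟩, hpq, hx⟩ := hx
  have hb := hS _ hpq
  simp only at hb
  obtain ⟨x1, x2⟩ := x
  rw [memPP]
  rcases hx with h | h <;> · rw [Prod.mk.injEq] at h; omega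

lemma expand_card {n : ℕ} {S : Finset (ℕ × ℕ)} (s t : ℕ) (hs : s ≤ 1) (ht : t ≤ 1)
    (hS : ∀ pq ∈ S, 1 ≤ pq.1 ∧ pq.1 < pq.2 ∧ pq.2 ≤ n)
    (hP : (S : Set (ℕ × ℕ)).Pairwise DisjPair) :
    (S.biUnion (fun pq =>
      {(2*pq.1 - s, 2*pq.2 - t), (2*pq.1 - (1-s), 2*pq.2 - (1-t))})).card = 2 * S.card := by
  rw [Finset.card_biUnion]
  · rw [Finset.sum_congr rfl (g := fun _ => 2) (fun pq hpq => ?_), Finset.sum_const,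
      smul_eq_mul, mul_comm]
    have hb := hS _ hpq
    refine Finset.card_pair ?_
    obtain ⟨p, q⟩ := pq
    simp only [ne_eq, Prod.mk.injEq, not_and]
    simp only at hb
    omega
  · intro x hx y hy hxy
    have hd := hP (Finset.mem_coe.mpr hx) (Finset.mem_coe.mpr hy) hxy
    have hbx := hS _ hx
    have hby := hS _ hy
    obtain ⟨p, q⟩ := x
    obtain ⟨p', q'⟩ := y
    simp only [DisjPair] at hd
    simp only at hbx hby hd
    rw [Function.onFun, Finset.disjoint_left]
    intro a ha ha'
    simp only [Finset.mem_insert, Finset.mem_singleton] at ha ha'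
    obtain ⟨a1, a2⟩ := a
    rcases ha with h | h <;> rcases ha' with h' | h' <;>
      · rw [Prod.mk.injEq] at h h'; omega

lemma expand_pairwise {n : ℕ} {S : Finset (ℕ × ℕ)} (s t : ℕ) (hs : s ≤ 1) (ht : t ≤ 1)
    (hS : ∀ pq ∈ S, 1 ≤ pq.1 ∧ pq.1 < pq.2 ∧ pq.2 ≤ n)
    (hP : (S : Set (ℕ × ℕ)).Pairwise DisjPair) :
    ((S.biUnion (fun pq =>
      {(2*pq.1 - s, 2*pq.2 - t), (2*pq.1 - (1-s), 2*pq.2 - (1-t))}) : Finset (ℕ × ℕ)) :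
        Set (ℕ × ℕ)).Pairwise DisjPair := by
  intro x hx y hy hxy
  rw [Finset.mem_coe, Finset.mem_biUnion] at hx hy
  obtain ⟨⟨p, q⟩, hpq, hx⟩ := hx
  obtain ⟨⟨p', q'⟩, hpq', hy⟩ := hy
  simp only [Finset.mem_insert, Finset.mem_singleton] at hx hy
  have hbx := hS _ hpq
  have hby := hS _ hpq'
  simp only at hbx hby
  obtain ⟨x1, x2⟩ := x
  obtain ⟨y1, y2⟩ := y
  simp only [ne_eq, Prod.mk.injEq, not_and] at hxy
  simp only [DisjPair]
  by_cases hpp : (p, q) = (p', q')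
  · rw [Prod.mk.injEq] at hpp
    obtain ⟨rfl, rfl⟩ := hpp
    rcases hx with h | h <;> rcases hy with h' | h' <;>
      · rw [Prod.mk.injEq] at h h'; omega
  · have hd := hP (Finset.mem_coe.mpr hpq) (Finset.mem_coe.mpr hpq') hpp
    simp only [DisjPair] at hd
    rcases hx with h | h <;> rcases hy with h' | h' <;>
      · rw [Prod.mk.injEq] at h h'; omega

/-- Expansion preserves parallelism: if `f` (on indices `1,…,n-1`) is a partition of `P_n`
into `n-1` parallel steps of size `n/2` (`n` even), then the expanded family `g` for order
`2n` — the first step `((2k-1,2k) : 1 ≤ k ≤ n)`, and for each original step its NW/SE and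
NE/SW expansions — is a partition of `P_{2n}` into `2n-1` parallel steps of `n` pairwise
disjoint pivot pairs each. -/
theorem stmt_9 (n : ℕ) (hn : Even n) (hp : 0 < n)
    (f : ℕ → Finset (ℕ × ℕ))
    (hsub : ∀ i ∈ Finset.Icc 1 (n - 1), f i ⊆ PivotPairs n)
    (hcard : ∀ i ∈ Finset.Icc 1 (n - 1), (f i).card = n / 2)
    (hstep : ∀ i ∈ Finset.Icc 1 (n - 1), ((f i : Set (ℕ × ℕ)).Pairwise DisjPair))
    (hdis : ∀ i ∈ Finset.Icc 1 (n - 1), ∀ j ∈ Finset.Icc 1 (n - 1),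
      i ≠ j → Disjoint (f i) (f j))
    (hcover : (Finset.Icc 1 (n - 1)).biUnion f = PivotPairs n)
    (g : ℕ → Finset (ℕ × ℕ))
    (hg1 : g 1 = (Finset.Icc 1 n).image (fun k => (2 * k - 1, 2 * k)))
    (hgeven : ∀ i ∈ Finset.Icc 2 (2 * n - 1), i % 2 = 0 →
      g i = (f (i / 2)).biUnion
        (fun pq => {(2 * pq.1 - 1, 2 * pq.2 - 1), (2 * pq.1, 2 * pq.2)}))
    (hgodd : ∀ i ∈ Finset.Icc 2 (2 * n - 1), i % 2 = 1 →
      g i = (f (i / 2)).biUnion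
        (fun pq => {(2 * pq.1 - 1, 2 * pq.2), (2 * pq.1, 2 * pq.2 - 1)})) :
    (∀ i ∈ Finset.Icc 1 (2 * n - 1), g i ⊆ PivotPairs (2 * n) ∧ (g i).card = n ∧
      ((g i : Set (ℕ × ℕ)).Pairwise DisjPair))
    ∧ (∀ i ∈ Finset.Icc 1 (2 * n - 1), ∀ j ∈ Finset.Icc 1 (2 * n - 1),
        i ≠ j → Disjoint (g i) (g j))
    ∧ (Finset.Icc 1 (2 * n - 1)).biUnion g = PivotPairs (2 * n) := by
  obtain ⟨r, hr⟩ := hn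
  have hbd : ∀ i ∈ Finset.Icc 1 (n - 1), ∀ pq ∈ f i,
      1 ≤ pq.1 ∧ pq.1 < pq.2 ∧ pq.2 ≤ n := by
    intro i hi pq hpq
    obtain ⟨p, q⟩ := pq
    exact memPP.mp (hsub i hi hpq)
  have hg1form : ∀ x ∈ g 1, ∃ k, 1 ≤ k ∧ k ≤ n ∧ x = (2*k - 1, 2*k) := by
    intro x hx
    rw [hg1] at hx
    simp only [Finset.mem_image, Finset.mem_Icc] at hx
    obtain ⟨k, hk, hxe⟩ := hx
    exact ⟨k, hk.1, hk.2, hxe.symm⟩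
  have hform : ∀ i, 2 ≤ i → i ≤ 2*n - 1 → ∀ x ∈ g i,
      ∃ p q, (p, q) ∈ f (i/2) ∧ 1 ≤ p ∧ p < q ∧ q ≤ n ∧
        ((i % 2 = 0 ∧ (x = (2*p - 1, 2*q - 1) ∨ x = (2*p, 2*q))) ∨
         (i % 2 = 1 ∧ (x = (2*p - 1, 2*q) ∨ x = (2*p, 2*q - 1)))) := by
    intro i h2 h3 x hx
    have hiI : i ∈ Finset.Icc 2 (2*n - 1) := Finset.mem_Icc.mpr ⟨h2, h3⟩
    have hiF : i/2 ∈ Finset.Icc 1 (n - 1) := Finset.mem_Icc.mpr (by omega)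
    rcases Nat.mod_two_eq_zero_or_one i with hpar | hpar
    · rw [hgeven i hiI hpar] at hx
      simp only [Finset.mem_biUnion, Finset.mem_insert, Finset.mem_singleton] at hx
      obtain ⟨⟨p, q⟩, hpq, hx⟩ := hx
      have hb := hbd _ hiF _ hpq
      exact ⟨p, q, hpq, hb.1, hb.2.1, hb.2.2, Or.inl ⟨hpar, hx⟩⟩
    · rw [hgodd i hiI hpar] at hx
      simp only [Finset.mem_biUnion, Finset.mem_insert, Finset.mem_singleton] at hx
      obtain ⟨⟨p, q⟩, hpq, hx⟩ := hx
      have hb := hbd _ hiF _ hpq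
      exact ⟨p, q, hpq, hb.1, hb.2.1, hb.2.2, Or.inr ⟨hpar, hx⟩⟩
  have part1 : ∀ i ∈ Finset.Icc 1 (2*n - 1), g i ⊆ PivotPairs (2*n) ∧ (g i).card = n ∧
      ((g i : Set (ℕ × ℕ)).Pairwise DisjPair) := by
    intro i hi
    rw [Finset.mem_Icc] at hi
    rcases eq_or_lt_of_le hi.1 with h1 | h1
    · rw [← h1, hg1]
      refine ⟨?_, ?_, ?_⟩
      · intro x hx
        simp only [Finset.mem_image, Finset.mem_Icc] at hx
        obtain ⟨k, hk, rfl⟩ := hx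
        rw [memPP]
        omega
      · rw [Finset.card_image_of_injOn, Nat.card_Icc]
        · omega
        · intro a ha b hb h
          rw [Prod.mk.injEq] at h
          omega
      · intro x hx y hy hxy
        rw [Finset.mem_coe, Finset.mem_image] at hx hy
        obtain ⟨k, hk, rfl⟩ := hx
        obtain ⟨k', hk', rfl⟩ := hy
        rw [Finset.mem_Icc] at hk hk'
        simp only [ne_eq, Prod.mk.injEq, not_and] at hxy
        simp only [DisjPair]
        omega
    · have hiI : i ∈ Finset.Icc 2 (2*n - 1) := Finset.mem_Icc.mpr ⟨h1, hi.2⟩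
      have hiF : i/2 ∈ Finset.Icc 1 (n - 1) := Finset.mem_Icc.mpr (by omega)
      have hb := hbd _ hiF
      have hst := hstep _ hiF
      have hc : 2 * (f (i/2)).card = n := by rw [hcard _ hiF]; omega
      rcases Nat.mod_two_eq_zero_or_one i with hpar | hpar
      · rw [hgeven i hiI hpar]
        exact ⟨expand_subset 1 1 le_rfl le_rfl hb,
          by have := expand_card 1 1 le_rfl le_rfl hb hst
             simp only [Nat.sub_self, Nat.sub_zero] at this
             rw [this]; exact hc,
          expand_pairwise 1 1 le_rfl le_rfl hb hst⟩
      · rw [hgodd i hiI hpar]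
        exact ⟨expand_subset 1 0 le_rfl (by omega) hb,
          by have := expand_card 1 0 le_rfl (by omega) hb hst
             simp only [Nat.sub_self, Nat.sub_zero] at this
             rw [this]; exact hc,
          expand_pairwise 1 0 le_rfl (by omega) hb hst⟩
  refine ⟨part1, ?_, ?_⟩
  · intro i hi j hj hij
    rw [Finset.mem_Icc] at hi hj
    rw [Finset.disjoint_left]
    intro x hxi hxj
    by_cases hi1 : i = 1 <;> by_cases hj1 : j = 1
    · exact hij (hi1.trans hj1.symm)
    · subst hi1
      obtain ⟨k, hk1, hk2, hxk⟩ := hg1form _ hxi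
      obtain ⟨p, q, hpq, hp1, hpq2, hq2, hsh⟩ := hform j (by omega) hj.2 _ hxj
      obtain ⟨x1, x2⟩ := x
      rw [Prod.mk.injEq] at hxk
      rcases hsh with ⟨_, h | h⟩ | ⟨_, h | h⟩ <;>
        · rw [Prod.mk.injEq] at h; omega
    · subst hj1
      obtain ⟨k, hk1, hk2, hxk⟩ := hg1form _ hxj
      obtain ⟨p, q, hpq, hp1, hpq2, hq2, hsh⟩ := hform i (by omega) hi.2 _ hxi
      obtain ⟨x1, x2⟩ := x
      rw [Prod.mk.injEq] at hxk
      rcases hsh with ⟨_, h | h⟩ | ⟨_, h | h⟩ <;>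
        · rw [Prod.mk.injEq] at h; omega
    · obtain ⟨p, q, hpq, hp1, hpq2, hq2, hsh⟩ := hform i (by omega) hi.2 _ hxi
      obtain ⟨p', q', hpq', hp1', hpq2', hq2', hsh'⟩ := hform j (by omega) hj.2 _ hxj
      obtain ⟨x1, x2⟩ := x
      by_cases hhalf : i / 2 = j / 2
      · have hpardiff : i % 2 ≠ j % 2 := by omega
        rcases hsh with ⟨he, h | h⟩ | ⟨he, h | h⟩ <;>
          rcases hsh' with ⟨he', h' | h'⟩ | ⟨he', h' | h'⟩ <;>
          · rw [Prod.mk.injEq] at h h'; omega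
      · have hiF : i/2 ∈ Finset.Icc 1 (n - 1) := Finset.mem_Icc.mpr (by omega)
        have hjF : j/2 ∈ Finset.Icc 1 (n - 1) := Finset.mem_Icc.mpr (by omega)
        have hne := Finset.disjoint_left.mp (hdis _ hiF _ hjF hhalf) hpq
        have hpp : p = p' ∧ q = q' := by
          rcases hsh with ⟨he, h | h⟩ | ⟨he, h | h⟩ <;>
            rcases hsh' with ⟨he', h' | h'⟩ | ⟨he', h' | h'⟩ <;>
            · rw [Prod.mk.injEq] at h h'; omega
        rw [hpp.1, hpp.2] at hne
        exact hne hpq'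
  · apply Finset.Subset.antisymm
    · intro x hx
      rw [Finset.mem_biUnion] at hx
      obtain ⟨i, hi, hxi⟩ := hx
      exact (part1 i hi).1 hxi
    · intro x hx
      obtain ⟨x1, x2⟩ := x
      rw [memPP] at hx
      obtain ⟨h1, h2, h3⟩ := hx
      rw [Finset.mem_biUnion]
      by_cases hpq : (x1 + 1) / 2 = (x2 + 1) / 2
      · refine ⟨1, Finset.mem_Icc.mpr ⟨le_rfl, by omega⟩, ?_⟩
        rw [hg1]
        simp only [Finset.mem_image, Finset.mem_Icc, Prod.mk.injEq]
        exact ⟨(x2 + 1) / 2, by omega, by omega, by omega⟩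
      · have hmem : ((x1 + 1) / 2, (x2 + 1) / 2) ∈ PivotPairs n := memPP.mpr (by omega)
        rw [← hcover, Finset.mem_biUnion] at hmem
        obtain ⟨i, hiI, hfi⟩ := hmem
        rw [Finset.mem_Icc] at hiI
        by_cases hpar : x1 % 2 = x2 % 2
        · refine ⟨2 * i, Finset.mem_Icc.mpr (by omega), ?_⟩
          rw [hgeven (2 * i) (Finset.mem_Icc.mpr (by omega)) (by omega)]
          simp only [Finset.mem_biUnion, Finset.mem_insert, Finset.mem_singleton]
          refine ⟨((x1 + 1) / 2, (x2 + 1) / 2), by rwa [show 2 * i / 2 = i by omega], ?_⟩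
          simp only [Prod.mk.injEq]
          omega
        · refine ⟨2 * i + 1, Finset.mem_Icc.mpr (by omega), ?_⟩
          rw [hgodd (2 * i + 1) (Finset.mem_Icc.mpr (by omega)) (by omega)]
          simp only [Finset.mem_biUnion, Finset.mem_insert, Finset.mem_singleton]
          refine ⟨((x1 + 1) / 2, (x2 + 1) / 2), by rwa [show (2 * i + 1) / 2 = i by omega], ?_⟩
          simp only [Prod.mk.injEq]
          omega
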